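/- Let M⊥ : V₀ → V₀, M⊥ x = (I − P) M x, be boundedly invertible on V₀ = u^⊥. Suppose ‖x‖ = 1 and ‖δ⊥(x)‖ ≤ min{√a, (1/2)[(1 + γ/(Γ K C_C ‖M⊥^{-1}‖))^{1/2} − 1]}. Then ‖δ⊥(x)‖ ≤ 2‖M⊥^{-1}‖ · ‖(I − P) r(x)‖ ≤ 2‖M⊥^{-1}‖ · ‖r(x)‖. -/

import Mathlib

/-!
Write `δ = (I - P) x` and `M = A - λ C`. Since `M u = 0` and `M` is symmetric, `M δ = M x` and
`⟪M x, x⟫ = ⟪M δ, δ⟫ ≤ Γ ‖δ‖²`. The latter gives `λ ⟪C x, x⟫ ≥ γ - Γ ‖δ‖² ≥ 3γ/4`, hence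
`λ(x) - λ ≤ (4λΓ / 3γ) ‖δ‖²`. The former gives `M δ = r(x) + (λ(x) - λ) C x`, so the inverse bound
on `V₀` yields `‖δ‖ ≤ ‖M⊥⁻¹‖ (‖(I - P) r(x)‖ + (λ(x) - λ) ‖C‖)`, and the smallness of `‖δ‖`
makes the last term at most `‖δ‖ / 6`.
-/

open scoped RealInnerProductSpace

theorem mul_sq_le_of_le_sqrt_div {d γ Γ : ℝ} (hγ : 0 ≤ γ) (hΓ : 0 < Γ) (hd : 0 ≤ d)
    (h : d ≤ √(γ / (4 * Γ))) : 4 * Γ * d ^ 2 ≤ γ := by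
  rw [Real.le_sqrt hd (by positivity), le_div_iff₀ (by positivity)] at h
  linarith

theorem mul_le_of_le_half_sqrt_one_add_div_sub_one {d γ K : ℝ} (hγ : 0 ≤ γ) (hK : 0 ≤ K)
    (h : d ≤ 1 / 2 * (√(1 + γ / K) - 1)) : d * (4 * K) ≤ γ := by
  have hd : d ≤ γ / K / 4 := by
    linarith [Real.sqrt_one_add_le (by linarith [div_nonneg hγ hK] : -1 ≤ γ / K)]
  rcases hK.eq_or_lt with rfl | hK
  · simpa using hγ
  calc d * (4 * K) ≤ γ / K / 4 * (4 * K) := by gcongr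
    _ = γ := by field_simp

section Projection

variable {H : Type*} [NormedAddCommGroup H] [InnerProductSpace ℝ H]

theorem sub_inner_div_inner_smul_eq_starProjection (u v : H) :
    v - (⟪v, u⟫ / ⟪u, u⟫) • u = (ℝ ∙ u)ᗮ.starProjection v := by
  rw [Submodule.starProjection_orthogonal_val, Submodule.starProjection_singleton,
    real_inner_self_eq_norm_sq, real_inner_comm]
  rfl

theorem inner_starProjection_orthogonal_singleton (u v : H) :
    ⟪(ℝ ∙ u)ᗮ.starProjection v, u⟫ = 0 :=
  Submodule.mem_orthogonal_singleton_iff_inner_left.mp (Submodule.starProjection_apply_mem _ v)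

variable {M : H →L[ℝ] H} {u : H}

theorem map_starProjection_orthogonal_singleton (hMu : M u = 0) (x : H) :
    M ((ℝ ∙ u)ᗮ.starProjection x) = M x := by
  rw [← sub_inner_div_inner_smul_eq_starProjection, map_sub, map_smul, hMu, smul_zero, sub_zero]

theorem inner_map_starProjection_orthogonal_singleton (hM : (M : H →ₗ[ℝ] H).IsSymmetric)
    (hMu : M u = 0) (x : H) :
    ⟪M ((ℝ ∙ u)ᗮ.starProjection x), (ℝ ∙ u)ᗮ.starProjection x⟫ = ⟪M x, x⟫ := by
  calc _ = ⟪M x, (ℝ ∙ u)ᗮ.starProjection x⟫ := by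
        rw [map_starProjection_orthogonal_singleton hMu]
    _ = ⟪x, M ((ℝ ∙ u)ᗮ.starProjection x)⟫ := hM x _
    _ = ⟪M x, x⟫ := by rw [map_starProjection_orthogonal_singleton hMu, real_inner_comm]

end Projection

section Eigenvector

variable {H : Type*} [NormedAddCommGroup H] [InnerProductSpace ℝ H]
  {A C : H →L[ℝ] H} {lam : ℝ} {u : H}

theorem inner_sub_mul_inner_le_of_eigenvector (hAsymm : (A : H →ₗ[ℝ] H).IsSymmetric)
    (hCsymm : (C : H →ₗ[ℝ] H).IsSymmetric) (hCnonneg : ∀ y, 0 ≤ ⟪C y, y⟫) {Γ : ℝ}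
    (hAΓ : ∀ y, ⟪A y, y⟫ ≤ Γ * ‖y‖ ^ 2) (hlam : 0 ≤ lam) (heig : A u = lam • C u) (x : H) :
    ⟪A x, x⟫ - lam * ⟪C x, x⟫ ≤ Γ * ‖(ℝ ∙ u)ᗮ.starProjection x‖ ^ 2 := by
  set y := (ℝ ∙ u)ᗮ.starProjection x
  have hM : ((A - lam • C : H →L[ℝ] H) : H →ₗ[ℝ] H).IsSymmetric :=
    hAsymm.sub (hCsymm.smul (conj_trivial lam))
  have hMu : (A - lam • C) u = 0 := by simp [heig]
  have h := inner_map_starProjection_orthogonal_singleton hM hMu x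
  simp only [sub_apply, smul_apply, inner_sub_left, real_inner_smul_left] at h
  nlinarith [hAΓ y, hCnonneg y]

theorem norm_starProjection_le_of_residual (heig : A u = lam • C u) {Minv : ℝ} (hMinv : 0 ≤ Minv)
    (hMinvB : ∀ y, ⟪y, u⟫ = 0 →
      ‖y‖ ≤ Minv * ‖(ℝ ∙ u)ᗮ.starProjection (A y - lam • C y)‖) (x : H) (ρ : ℝ) :
    ‖(ℝ ∙ u)ᗮ.starProjection x‖ ≤
      Minv * (‖(ℝ ∙ u)ᗮ.starProjection (A x - ρ • C x)‖ + |ρ - lam| * ‖C x‖) := by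
  set Q := (ℝ ∙ u)ᗮ.starProjection
  have hMu : (A - lam • C) u = 0 := by simp [heig]
  have hsplit : A (Q x) - lam • C (Q x) = (A x - ρ • C x) + (ρ - lam) • C x := by
    have h := map_starProjection_orthogonal_singleton hMu x
    simp only [sub_apply, smul_apply] at h
    rw [h]; module
  calc ‖Q x‖ ≤ Minv * ‖Q (A (Q x) - lam • C (Q x))‖ :=
        hMinvB _ (inner_starProjection_orthogonal_singleton u x)
    _ ≤ Minv * (‖Q (A x - ρ • C x)‖ + |ρ - lam| * ‖C x‖) := by
        rw [hsplit, map_add, map_smul]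
        gcongr
        refine (norm_add_le _ _).trans ?_
        rw [norm_smul, Real.norm_eq_abs]
        gcongr
        exact Submodule.norm_starProjection_apply_le _ _

theorem rayleigh_sub_le_of_eigenvector (hAsymm : (A : H →ₗ[ℝ] H).IsSymmetric)
    (hCsymm : (C : H →ₗ[ℝ] H).IsSymmetric) (hCnonneg : ∀ y, 0 ≤ ⟪C y, y⟫) {γ Γ : ℝ} (hγ : 0 < γ)
    (hA : ∀ y, γ * ‖y‖ ^ 2 ≤ ⟪A y, y⟫ ∧ ⟪A y, y⟫ ≤ Γ * ‖y‖ ^ 2) (hlam : 0 ≤ lam)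
    (heig : A u = lam • C u) {x : H} (hx : ‖x‖ = 1)
    (hsmall : 4 * Γ * ‖(ℝ ∙ u)ᗮ.starProjection x‖ ^ 2 ≤ γ) :
    ⟪A x, x⟫ / ⟪C x, x⟫ - lam ≤ 4 * lam * Γ / (3 * γ) * ‖(ℝ ∙ u)ᗮ.starProjection x‖ ^ 2 := by
  set d := ‖(ℝ ∙ u)ᗮ.starProjection x‖
  have hgap : ⟪A x, x⟫ - lam * ⟪C x, x⟫ ≤ Γ * d ^ 2 :=
    inner_sub_mul_inner_le_of_eigenvector hAsymm hCsymm hCnonneg (fun y => (hA y).2) hlam heig x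
  have hγA : γ ≤ ⟪A x, x⟫ := by simpa [hx] using (hA x).1
  have hΓ : 0 ≤ Γ * d ^ 2 := by
    have : 0 ≤ Γ := hγ.le.trans (by simpa [hx] using (hA x).1.trans (hA x).2)
    positivity
  have hCx : 3 * γ ≤ 4 * (lam * ⟪C x, x⟫) := by linarith
  have hCx0 : 0 < ⟪C x, x⟫ := pos_of_mul_pos_right (by linarith) hlam
  rw [div_sub' hCx0.ne', div_le_iff₀ hCx0,
    show 4 * lam * Γ / (3 * γ) * d ^ 2 * ⟪C x, x⟫ = Γ * d ^ 2 * (4 * (lam * ⟪C x, x⟫)) / (3 * γ)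
      by ring, le_div_iff₀ (by positivity)]
  nlinarith [mul_le_mul_of_nonneg_left hCx hΓ]

end Eigenvector

theorem stmt11_general {H : Type*} [NormedAddCommGroup H] [InnerProductSpace ℝ H]
    (A C : H →L[ℝ] H)
    (hAsymm : ∀ y z, ⟪A y, z⟫ = ⟪y, A z⟫) (hCsymm : ∀ y z, ⟪C y, z⟫ = ⟪y, C z⟫)
    (hCpos : ∀ y, y ≠ 0 → 0 < ⟪C y, y⟫)
    (γ Γ : ℝ) (hγ : 0 < γ)
    (hA : ∀ y, γ * ‖y‖ ^ 2 ≤ ⟪A y, y⟫ ∧ ⟪A y, y⟫ ≤ Γ * ‖y‖ ^ 2)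
    (lam : ℝ) (hlam : 0 < lam) (u : H) (heig : A u = lam • C u)
    (hmin : ∀ y, y ≠ 0 → lam ≤ ⟪A y, y⟫ / ⟪C y, y⟫)
    (Minv : ℝ) (hMinv : 0 < Minv)
    (hMinvB : ∀ y, ⟪y, u⟫ = 0 →
      ‖y‖ ≤ Minv * ‖(A y - lam • C y) - (⟪A y - lam • C y, u⟫ / ⟪u, u⟫) • u‖)
    (x : H) (hx : ‖x‖ = 1)
    (hδ : ‖x - (⟪x, u⟫ / ⟪u, u⟫) • u‖ ≤
      min (Real.sqrt (γ / (4 * Γ)))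
        ((1 / 2) * (Real.sqrt (1 + γ / (Γ * (2 * lam) * ‖C‖ * Minv)) - 1))) :
    ‖x - (⟪x, u⟫ / ⟪u, u⟫) • u‖ ≤
        2 * Minv * ‖(A x - (⟪A x, x⟫ / ⟪C x, x⟫) • C x) -
          (⟪A x - (⟪A x, x⟫ / ⟪C x, x⟫) • C x, u⟫ / ⟪u, u⟫) • u‖ ∧
      2 * Minv * ‖(A x - (⟪A x, x⟫ / ⟪C x, x⟫) • C x) -
          (⟪A x - (⟪A x, x⟫ / ⟪C x, x⟫) • C x, u⟫ / ⟪u, u⟫) • u‖ ≤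
        2 * Minv * ‖A x - (⟪A x, x⟫ / ⟪C x, x⟫) • C x‖ := by
  simp only [sub_inner_div_inner_smul_eq_starProjection] at hMinvB hδ ⊢
  set Q := (ℝ ∙ u)ᗮ.starProjection
  set ρ := ⟪A x, x⟫ / ⟪C x, x⟫
  set d := ‖Q x‖
  have hx0 : x ≠ 0 := by rintro rfl; simp at hx
  have hΓ : 0 < Γ := hγ.trans_le (by simpa [hx] using (hA x).1.trans (hA x).2)
  have hCnonneg : ∀ y, 0 ≤ ⟪C y, y⟫ := fun y => by
    rcases eq_or_ne y 0 with rfl | hy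
    · simp
    · exact (hCpos y hy).le
  have hd_sq : 4 * Γ * d ^ 2 ≤ γ :=
    mul_sq_le_of_le_sqrt_div hγ.le hΓ (norm_nonneg _) (hδ.trans (min_le_left _ _))
  have hd : d * (4 * (Γ * (2 * lam) * ‖C‖ * Minv)) ≤ γ :=
    mul_le_of_le_half_sqrt_one_add_div_sub_one hγ.le (by positivity) (hδ.trans (min_le_right _ _))
  have hρ : ρ - lam ≤ 4 * lam * Γ / (3 * γ) * d ^ 2 :=
    rayleigh_sub_le_of_eigenvector hAsymm hCsymm hCnonneg hγ hA hlam.le heig hx hd_sq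
  have hρ0 : 0 ≤ ρ - lam := sub_nonneg.mpr (hmin x hx0)
  have hCx : ‖C x‖ ≤ ‖C‖ := by simpa [hx] using C.le_opNorm x
  have hcorr : Minv * ((ρ - lam) * ‖C x‖) ≤ d / 6 := calc
    _ ≤ Minv * (4 * lam * Γ / (3 * γ) * d ^ 2 * ‖C‖) := by gcongr
    _ = d / (6 * γ) * (d * (4 * (Γ * (2 * lam) * ‖C‖ * Minv))) := by field_simp; ring
    _ ≤ d / (6 * γ) * γ := by gcongr
    _ = d / 6 := by field_simp
  have hres : d ≤ Minv * (‖Q (A x - ρ • C x)‖ + (ρ - lam) * ‖C x‖) :=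
    (norm_starProjection_le_of_residual heig hMinv.le hMinvB x ρ).trans_eq
      (by rw [abs_of_nonneg hρ0])
  have hR : 0 ≤ Minv * ‖Q (A x - ρ • C x)‖ := by positivity
  refine ⟨by linarith [mul_add Minv ‖Q (A x - ρ • C x)‖ ((ρ - lam) * ‖C x‖)], ?_⟩
  gcongr
  exact Submodule.norm_starProjection_apply_le _ _

/-- If `M⊥ = (I-P)M|_{V₀}` is boundedly invertible with
`‖y‖ ≤ Minv ‖(I-P)M y‖` on `V₀ = u^⊥`, and the orthogonal error component
`δ⊥(x) = (I-P)x` of a unit vector `x` is small enough, then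
`‖δ⊥(x)‖ ≤ 2 Minv ‖(I-P)r(x)‖ ≤ 2 Minv ‖r(x)‖`, where `r(x) = (A - λ(x)C)x`,
`a = γ/(4Γ)`, `K = 2λ̲`, `C_C = ‖C‖`. -/
theorem stmt11 {H : Type*} [NormedAddCommGroup H] [InnerProductSpace ℝ H] [CompleteSpace H]
    (A C : H →L[ℝ] H)
    (hAsymm : ∀ y z, ⟪A y, z⟫ = ⟪y, A z⟫) (hCsymm : ∀ y z, ⟪C y, z⟫ = ⟪y, C z⟫)
    (hCpos : ∀ y, y ≠ 0 → 0 < ⟪C y, y⟫)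
    (γ Γ : ℝ) (hγ : 0 < γ)
    (hA : ∀ y, γ * ‖y‖ ^ 2 ≤ ⟪A y, y⟫ ∧ ⟪A y, y⟫ ≤ Γ * ‖y‖ ^ 2)
    (lam : ℝ) (hlam : 0 < lam) (u : H) (hu : u ≠ 0) (heig : A u = lam • C u)
    (hmin : ∀ y, y ≠ 0 → lam ≤ ⟪A y, y⟫ / ⟪C y, y⟫)
    (Minv : ℝ) (hMinv : 0 < Minv)
    (hMinvB : ∀ y, ⟪y, u⟫ = 0 →
      ‖y‖ ≤ Minv * ‖(A y - lam • C y) - (⟪A y - lam • C y, u⟫ / ⟪u, u⟫) • u‖)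
    (x : H) (hx : ‖x‖ = 1)
    (hδ : ‖x - (⟪x, u⟫ / ⟪u, u⟫) • u‖ ≤
      min (Real.sqrt (γ / (4 * Γ)))
        ((1 / 2) * (Real.sqrt (1 + γ / (Γ * (2 * lam) * ‖C‖ * Minv)) - 1)))
    (hray : ⟪A x, x⟫ / ⟪C x, x⟫ - lam ≤
      (2 * Γ * (2 * lam) * ‖C‖ / γ) * ‖x - (⟪x, u⟫ / ⟪u, u⟫) • u‖ ^ 2) :
    ‖x - (⟪x, u⟫ / ⟪u, u⟫) • u‖ ≤
        2 * Minv * ‖(A x - (⟪A x, x⟫ / ⟪C x, x⟫) • C x) -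
          (⟪A x - (⟪A x, x⟫ / ⟪C x, x⟫) • C x, u⟫ / ⟪u, u⟫) • u‖ ∧
      2 * Minv * ‖(A x - (⟪A x, x⟫ / ⟪C x, x⟫) • C x) -
          (⟪A x - (⟪A x, x⟫ / ⟪C x, x⟫) • C x, u⟫ / ⟪u, u⟫) • u‖ ≤
        2 * Minv * ‖A x - (⟪A x, x⟫ / ⟪C x, x⟫) • C x‖ :=
  stmt11_general A C hAsymm hCsymm hCpos γ Γ hγ hA lam hlam u heig hmin Minv hMinv hMinvB x hx hδ
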